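/- Under the same hypotheses (A₂ = A₃ = 0, A₁, S₂ = C₁A₁⁻¹B₁ᵀ, S₃ = C₂S₂⁻¹B₂ᵀ invertible), the preconditioned matrix 𝒯₂ = diag(A₁, S₂, -S₃)⁻¹ 𝒜 = [[I, A₁⁻¹B₁ᵀ, 0],[S₂⁻¹C₁, 0, S₂⁻¹B₂ᵀ],[0, -S₃⁻¹C₂, 0]] satisfies (𝒯₂ - I)(𝒯₂² - 𝒯₂ - I)(𝒯₂³ - 𝒯₂² - I) = 0. -/

import Mathlib

/-!
The preconditioned matrix has the block form `T = [[1, E, 0], [F, 0, G], [0, H, 0]]` with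
`E = A₁⁻¹B₁ᵀ`, `F = S₂⁻¹C₁`, `G = S₂⁻¹B₂ᵀ`, `H = -S₃⁻¹C₂`, and the definitions of `S₂` and `S₃` say
exactly that `FE = 1` and `HG = -1`. From these two relations alone a block computation gives
`(T² - T - 1)(T³ - T² - 1) = diag(1 - EF, 0, 0)`; the first block column of `T - 1` is `(0, F, 0)`
and `F(1 - EF) = 0`, so `T - 1` annihilates this product.
-/

open Matrix

namespace Matrix

variable {R l m n l' m' n' k₁ k₂ k₃ : Type*}

def fromBlocks₃ (A₁₁ : Matrix l l' R) (A₁₂ : Matrix l m' R) (A₁₃ : Matrix l n' R)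
    (A₂₁ : Matrix m l' R) (A₂₂ : Matrix m m' R) (A₂₃ : Matrix m n' R)
    (A₃₁ : Matrix n l' R) (A₃₂ : Matrix n m' R) (A₃₃ : Matrix n n' R) :
    Matrix ((l ⊕ m) ⊕ n) ((l' ⊕ m') ⊕ n') R :=
  fromBlocks (fromBlocks A₁₁ A₁₂ A₂₁ A₂₂) (fromRows A₁₃ A₂₃) (fromCols A₃₁ A₃₂) A₃₃

theorem fromBlocks₃_mul [Fintype l'] [Fintype m'] [Fintype n'] [NonUnitalNonAssocSemiring R]
    (A₁₁ : Matrix l l' R) (A₁₂ : Matrix l m' R) (A₁₃ : Matrix l n' R)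
    (A₂₁ : Matrix m l' R) (A₂₂ : Matrix m m' R) (A₂₃ : Matrix m n' R)
    (A₃₁ : Matrix n l' R) (A₃₂ : Matrix n m' R) (A₃₃ : Matrix n n' R)
    (B₁₁ : Matrix l' k₁ R) (B₁₂ : Matrix l' k₂ R) (B₁₃ : Matrix l' k₃ R)
    (B₂₁ : Matrix m' k₁ R) (B₂₂ : Matrix m' k₂ R) (B₂₃ : Matrix m' k₃ R)
    (B₃₁ : Matrix n' k₁ R) (B₃₂ : Matrix n' k₂ R) (B₃₃ : Matrix n' k₃ R) :
    fromBlocks₃ A₁₁ A₁₂ A₁₃ A₂₁ A₂₂ A₂₃ A₃₁ A₃₂ A₃₃ *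
        fromBlocks₃ B₁₁ B₁₂ B₁₃ B₂₁ B₂₂ B₂₃ B₃₁ B₃₂ B₃₃ =
      fromBlocks₃
        (A₁₁ * B₁₁ + A₁₂ * B₂₁ + A₁₃ * B₃₁) (A₁₁ * B₁₂ + A₁₂ * B₂₂ + A₁₃ * B₃₂)
        (A₁₁ * B₁₃ + A₁₂ * B₂₃ + A₁₃ * B₃₃)
        (A₂₁ * B₁₁ + A₂₂ * B₂₁ + A₂₃ * B₃₁) (A₂₁ * B₁₂ + A₂₂ * B₂₂ + A₂₃ * B₃₂)
        (A₂₁ * B₁₃ + A₂₂ * B₂₃ + A₂₃ * B₃₃)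
        (A₃₁ * B₁₁ + A₃₂ * B₂₁ + A₃₃ * B₃₁) (A₃₁ * B₁₂ + A₃₂ * B₂₂ + A₃₃ * B₃₂)
        (A₃₁ * B₁₃ + A₃₂ * B₂₃ + A₃₃ * B₃₃) := by
  ext ((i | i) | i) ((j | j) | j) <;>
    simp [fromBlocks₃, mul_apply, Fintype.sum_sum_type, add_assoc]

theorem fromBlocks₃_sub [Sub R]
    (A₁₁ : Matrix l l' R) (A₁₂ : Matrix l m' R) (A₁₃ : Matrix l n' R)
    (A₂₁ : Matrix m l' R) (A₂₂ : Matrix m m' R) (A₂₃ : Matrix m n' R)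
    (A₃₁ : Matrix n l' R) (A₃₂ : Matrix n m' R) (A₃₃ : Matrix n n' R)
    (B₁₁ : Matrix l l' R) (B₁₂ : Matrix l m' R) (B₁₃ : Matrix l n' R)
    (B₂₁ : Matrix m l' R) (B₂₂ : Matrix m m' R) (B₂₃ : Matrix m n' R)
    (B₃₁ : Matrix n l' R) (B₃₂ : Matrix n m' R) (B₃₃ : Matrix n n' R) :
    fromBlocks₃ A₁₁ A₁₂ A₁₃ A₂₁ A₂₂ A₂₃ A₃₁ A₃₂ A₃₃ -
        fromBlocks₃ B₁₁ B₁₂ B₁₃ B₂₁ B₂₂ B₂₃ B₃₁ B₃₂ B₃₃ =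
      fromBlocks₃ (A₁₁ - B₁₁) (A₁₂ - B₁₂) (A₁₃ - B₁₃) (A₂₁ - B₂₁) (A₂₂ - B₂₂) (A₂₃ - B₂₃)
        (A₃₁ - B₃₁) (A₃₂ - B₃₂) (A₃₃ - B₃₃) := by
  ext ((i | i) | i) ((j | j) | j) <;> simp [fromBlocks₃]

theorem fromBlocks₃_zero [Zero R] :
    fromBlocks₃ (0 : Matrix l l' R) (0 : Matrix l m' R) (0 : Matrix l n' R)
      (0 : Matrix m l' R) (0 : Matrix m m' R) (0 : Matrix m n' R)
      (0 : Matrix n l' R) (0 : Matrix n m' R) (0 : Matrix n n' R) = 0 := by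
  ext ((i | i) | i) ((j | j) | j) <;> simp [fromBlocks₃]

theorem fromBlocks₃_one [DecidableEq l] [DecidableEq m] [DecidableEq n] [Zero R] [One R] :
    fromBlocks₃ (1 : Matrix l l R) 0 0 0 (1 : Matrix m m R) 0 0 0 (1 : Matrix n n R) = 1 := by
  ext ((i | i) | i) ((j | j) | j) <;> simp [fromBlocks₃, one_apply]

theorem inv_fromBlocks₃_diag_of_isUnit [Fintype l] [Fintype m] [Fintype n]
    [DecidableEq l] [DecidableEq m] [DecidableEq n] [CommRing R]
    {A : Matrix l l R} {B : Matrix m m R} {C : Matrix n n R}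
    (hA : IsUnit A) (hB : IsUnit B) (hC : IsUnit C) :
    (fromBlocks₃ A 0 0 0 B 0 0 0 C)⁻¹ = fromBlocks₃ A⁻¹ 0 0 0 B⁻¹ 0 0 0 C⁻¹ := by
  refine inv_eq_left_inv ?_
  rw [fromBlocks₃_mul, ← fromBlocks₃_one]
  simp [nonsing_inv_mul, (isUnit_iff_isUnit_det _).mp, hA, hB, hC]

theorem mul_mul_of_mul_eq [Fintype l] [Fintype m] [NonUnitalSemiring R] {F : Matrix n l R}
    {E : Matrix l m R} {P : Matrix n m R} (h : F * E = P) (X : Matrix m k₁ R) :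
    F * (E * X) = P * X := by
  rw [← Matrix.mul_assoc, h]

end Matrix

section
variable {R a b c : Type*} [Ring R] [Fintype a] [Fintype b] [Fintype c]
  [DecidableEq a] [DecidableEq b] [DecidableEq c]

theorem sub_one_mul_quadratic_mul_cubic_eq_zero (E : Matrix a b R) (F : Matrix b a R)
    (G : Matrix b c R) (H : Matrix c b R) (hFE : F * E = 1) (hHG : H * G = -1)
    (T : Matrix ((a ⊕ b) ⊕ c) ((a ⊕ b) ⊕ c) R) (hT : T = fromBlocks₃ 1 E 0 F 0 G 0 H 0) :
    (T - 1) * (T ^ 2 - T - 1) * (T ^ 3 - T ^ 2 - 1) = 0 := by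
  have hT2 : T ^ 2 = fromBlocks₃ (1 + E * F) E (E * G) F (1 + G * H) 0 (H * F) 0 (-1) := by
    rw [sq, hT, fromBlocks₃_mul]
    congr 1 <;> simp [hFE, hHG]
  have hT3 : T ^ 3 = fromBlocks₃ (1 + E * F + E * F) (E + E + E * G * H) (E * G)
      (F + F + G * H * F) 1 0 (H * F) 0 0 := by
    rw [pow_succ, hT2, hT, fromBlocks₃_mul]
    congr 1 <;> simp [Matrix.add_mul, Matrix.mul_assoc, hFE, hHG, add_assoc]
  have hX : T ^ 2 - T - 1 =
      fromBlocks₃ (E * F - 1) 0 (E * G) 0 (G * H) (-G) (H * F) (-H) (-2) := by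
    rw [hT2, hT, ← fromBlocks₃_one, fromBlocks₃_sub, fromBlocks₃_sub]
    congr 1 <;> first | abel1 | norm_num
  have hN : T ^ 3 - T ^ 2 - 1 =
      fromBlocks₃ (E * F - 1) (E + E * G * H) 0 (F + G * H * F) (-(G * H) - 1) 0 0 0 0 := by
    rw [hT3, hT2, ← fromBlocks₃_one, fromBlocks₃_sub, fromBlocks₃_sub]
    congr 1 <;> abel
  have hXN : (T ^ 2 - T - 1) * (T ^ 3 - T ^ 2 - 1) = fromBlocks₃ (1 - E * F) 0 0 0 0 0 0 0 0 := by
    rw [hX, hN, fromBlocks₃_mul]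
    congr 1 <;> simp [Matrix.mul_add, Matrix.sub_mul, Matrix.mul_sub, Matrix.mul_assoc,
      mul_mul_of_mul_eq hFE, mul_mul_of_mul_eq hHG, hFE]
  rw [Matrix.mul_assoc, hXN, hT, ← fromBlocks₃_one, fromBlocks₃_sub, fromBlocks₃_mul,
    ← fromBlocks₃_zero]
  congr 1 <;> simp [Matrix.mul_sub, mul_mul_of_mul_eq hFE]

end

theorem stmt_5 {n₁ n₂ n₃ : ℕ}
    (A₁ : Matrix (Fin n₁) (Fin n₁) ℝ)
    (B₁ C₁ : Matrix (Fin n₂) (Fin n₁) ℝ) (B₂ C₂ : Matrix (Fin n₃) (Fin n₂) ℝ)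
    (hA₁ : IsUnit A₁)
    (S₂ : Matrix (Fin n₂) (Fin n₂) ℝ) (hS₂def : S₂ = C₁ * A₁⁻¹ * B₁ᵀ)
    (hS₂ : IsUnit S₂)
    (S₃ : Matrix (Fin n₃) (Fin n₃) ℝ) (hS₃def : S₃ = C₂ * S₂⁻¹ * B₂ᵀ)
    (hS₃ : IsUnit S₃)
    (𝒜 : Matrix ((Fin n₁ ⊕ Fin n₂) ⊕ Fin n₃) ((Fin n₁ ⊕ Fin n₂) ⊕ Fin n₃) ℝ)
    (h𝒜 : 𝒜 = fromBlocks (fromBlocks A₁ B₁ᵀ C₁ 0) (fromRows 0 B₂ᵀ)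
      (fromCols 0 C₂) 0)
    (T : Matrix ((Fin n₁ ⊕ Fin n₂) ⊕ Fin n₃) ((Fin n₁ ⊕ Fin n₂) ⊕ Fin n₃) ℝ)
    (hT : T = (fromBlocks (fromBlocks A₁ 0 0 S₂) 0 0 (-S₃))⁻¹ * 𝒜) :
    (T - 1) * (T ^ 2 - T - 1) * (T ^ 3 - T ^ 2 - 1) = 0 := by
  have hD : fromBlocks (fromBlocks A₁ 0 0 S₂) 0 0 (-S₃) = fromBlocks₃ A₁ 0 0 0 S₂ 0 0 0 (-S₃) := by
    simp [fromBlocks₃]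
  have hFE : (S₂⁻¹ * C₁) * (A₁⁻¹ * B₁ᵀ) = 1 := by
    rw [Matrix.mul_assoc, ← Matrix.mul_assoc C₁, ← hS₂def,
      nonsing_inv_mul _ ((isUnit_iff_isUnit_det _).mp hS₂)]
  have hHG : ((-S₃)⁻¹ * C₂) * (S₂⁻¹ * B₂ᵀ) = -1 := by
    rw [Matrix.mul_assoc, ← Matrix.mul_assoc C₂, ← hS₃def, ← neg_neg S₃, Matrix.mul_neg, neg_neg,
      nonsing_inv_mul _ ((isUnit_iff_isUnit_det _).mp hS₃.neg)]
  refine sub_one_mul_quadratic_mul_cubic_eq_zero _ _ _ _ hFE hHG T ?_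
  rw [hT, hD, inv_fromBlocks₃_diag_of_isUnit hA₁ hS₂ hS₃.neg, h𝒜]
  change _ * fromBlocks₃ A₁ B₁ᵀ 0 C₁ 0 B₂ᵀ 0 C₂ 0 = _
  rw [fromBlocks₃_mul]
  congr 1 <;> simp [nonsing_inv_mul _ ((isUnit_iff_isUnit_det _).mp hA₁)]
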